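/- arXiv:1811.07202 — 5 statements merged into one kernel-verified Lean document; each statement's English description precedes it below -/
import Mathlib

section
/- Let A and B be matrices in GL₂(ℤ) such that A and B are conjugate modulo m for every integer m ≥ 1 (i.e., the reductions of A and B in GL₂(ℤ/mℤ) are conjugate for every m ≥ 1). Then the groups G_A and G_B have the same finite quotients: every finite group is a surjective homomorphic image of G_A if and only if it is a surjective homomorphic image of G_B. -/
open Matrix Polynomial IntermediateField

/-- The additive automorphism of `Fin 2 → ℤ` given by an element of `GL₂(ℤ)`. -/
noncomputable def matAddAut (A : GL (Fin 2) ℤ) : (Fin 2 → ℤ) ≃+ (Fin 2 → ℤ) :=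
  (LinearMap.GeneralLinearGroup.generalLinearEquiv ℤ (Fin 2 → ℤ)
    (Matrix.GeneralLinearGroup.toLin A)).toAddEquiv

/-- The same automorphism, viewed multiplicatively. -/
noncomputable def matMulAut (A : GL (Fin 2) ℤ) :
    MulAut (Multiplicative (Fin 2 → ℤ)) :=
  AddEquiv.toMultiplicative (matAddAut A)

/-- The group `G_A = (ℤ × ℤ) ⋊_A ℤ`, where `ℤ` acts on `ℤ × ℤ` by `n ↦ Aⁿ`. -/
noncomputable abbrev Gmat (A : GL (Fin 2) ℤ) :=
  SemidirectProduct (Multiplicative (Fin 2 → ℤ)) (Multiplicative ℤ)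
    (zpowersHom (MulAut (Multiplicative (Fin 2 → ℤ))) (matMulAut A))

/-- `A` and `B` are conjugate modulo `m`: their reductions in `GL₂(ℤ/mℤ)` are conjugate. -/
def ConjMod (m : ℕ) (A B : GL (Fin 2) ℤ) : Prop :=
  IsConj (Units.map ((Int.castRingHom (ZMod m)).mapMatrix).toMonoidHom A)
         (Units.map ((Int.castRingHom (ZMod m)).mapMatrix).toMonoidHom B)

/-- Two groups have the same finite quotients: every finite group is a surjective image of
one iff it is a surjective image of the other. -/
def SameFiniteQuotients (G H : Type*) [Group G] [Group H] : Prop :=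
  ∀ (Q : Type) [Group Q] [Finite Q],
    (∃ f : G →* Q, Function.Surjective f) ↔ (∃ f : H →* Q, Function.Surjective f)

/-!
A homomorphism `f` from `G_A` onto a finite group `Q` of order `m` kills `m • ℤ²`, so it factors
through the reduction `G_A → (ℤ/m)² ⋊_Ā ℤ`. If `c` conjugates the reduction `B̄` of `B` to `Ā`,
then `v ↦ c v̄` makes `G_B → (ℤ/m)² ⋊_Ā ℤ` surjective too, and composing gives `G_B ↠ Q`.
-/

open Function SemidirectProduct

namespace SemidirectProduct

variable {N₁ G₁ N₂ G₂ : Type*} [Group N₁] [Group G₁] [Group N₂] [Group G₂]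
  {φ₁ : G₁ →* MulAut N₁} {φ₂ : G₂ →* MulAut N₂} {fn : N₁ →* N₂} {fg : G₁ →* G₂}
  (h : ∀ g : G₁, fn.comp (φ₁ g).toMonoidHom = (φ₂ (fg g)).toMonoidHom.comp fn)
include h

theorem map_surjective (hn : Surjective fn) (hg : Surjective fg) : Surjective (map fn fg h) := by
  rintro ⟨n, g⟩
  obtain ⟨n, rfl⟩ := hn n
  obtain ⟨g, rfl⟩ := hg g
  exact ⟨⟨n, g⟩, rfl⟩

theorem ker_map_le_ker {Q : Type*} [Group Q] (hg : Injective fg) {f : N₁ ⋊[φ₁] G₁ →* Q}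
    (hf : fn.ker ≤ (f.comp inl).ker) : (map fn fg h).ker ≤ f.ker := by
  intro x hx
  have hleft : fn x.left = 1 := congrArg left hx
  have hright : x.right = 1 := hg <| by simpa using congrArg right hx
  rw [MonoidHom.mem_ker, ← inl_left_mul_inr_right x, hright, map_one, mul_one]
  exact hf hleft

end SemidirectProduct

theorem MonoidHom.liftOfSurjective_surjective {G H Q : Type*} [Group G] [Group H] [Group Q]
    {π : G →* H} (hπ : Surjective π) {f : G →* Q} (hf : Surjective f) (hker : π.ker ≤ f.ker) :
    Surjective (π.liftOfSurjective hπ ⟨f, hker⟩) := by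
  intro q
  obtain ⟨g, rfl⟩ := hf q
  exact ⟨π g, by simp⟩

abbrev MappingTorus (N : Type*) [Group N] (σ : MulAut N) :=
  N ⋊[zpowersHom (MulAut N) σ] Multiplicative ℤ

namespace MappingTorus

variable {N N' : Type*} [Group N] [Group N'] {σ : MulAut N} {σ' : MulAut N'} {p : N →* N'}

theorem map_zpow_apply (hp : ∀ x, p (σ x) = σ' (p x)) (k : ℤ) (x : N) :
    p ((σ ^ k) x) = (σ' ^ k) (p x) := by
  have hp_inv (x : N) : p (σ⁻¹ x) = σ'⁻¹ (p x) := by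
    simpa using congrArg (σ'⁻¹ : MulAut N') (hp (σ⁻¹ x)).symm
  induction k generalizing x with
  | zero => rfl
  | succ k ih => simp only [_root_.zpow_add_one, MulAut.mul_apply, hp, ih]
  | pred k ih => simp only [_root_.zpow_sub_one, MulAut.mul_apply, hp_inv, ih]

variable (p) in
noncomputable def map (hp : ∀ x, p (σ x) = σ' (p x)) :
    MappingTorus N σ →* MappingTorus N' σ' :=
  SemidirectProduct.map p (MonoidHom.id _) fun k => MonoidHom.ext (map_zpow_apply hp k.toAdd)

section

variable (hp : ∀ x, p (σ x) = σ' (p x))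
include hp

theorem map_surjective (hsurj : Surjective p) : Surjective (map p hp) :=
  SemidirectProduct.map_surjective _ hsurj surjective_id

theorem ker_map_le_ker {Q : Type*} [Group Q] {f : MappingTorus N σ →* Q}
    (hf : p.ker ≤ (f.comp inl).ker) : (map p hp).ker ≤ f.ker :=
  SemidirectProduct.ker_map_le_ker _ injective_id hf

end

end MappingTorus

section vecMap

variable (n : Type*) {R S : Type*} [CommRing R] [CommRing S]

def vecMap (r : R →+* S) : Multiplicative (n → R) →* Multiplicative (n → S) :=
  AddMonoidHom.toMultiplicative (r.toAddMonoidHom.compLeft n)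

theorem vecMap_surjective {r : R →+* S} (hr : Surjective r) : Surjective (vecMap n r) := fun v =>
  ⟨Multiplicative.ofAdd fun i => surjInv hr (v.toAdd i), funext fun _ => surjInv_eq hr _⟩

theorem ker_vecMap_intCast_le {m : ℕ} {Q : Type*} [Group Q] (hQ : ∀ q : Q, q ^ m = 1)
    (f : Multiplicative (n → ℤ) →* Q) :
    (vecMap n (Int.castRingHom (ZMod m))).ker ≤ f.ker := by
  intro v hv
  have hdvd (i : n) : (m : ℤ) ∣ v.toAdd i :=
    (ZMod.intCast_zmod_eq_zero_iff_dvd _ _).mp (congrFun (congrArg Multiplicative.toAdd hv) i)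
  have hv_eq : v = Multiplicative.ofAdd (fun i => v.toAdd i / m) ^ m := by
    ext i
    simp [Int.mul_ediv_cancel' (hdvd i)]
  rw [MonoidHom.mem_ker, hv_eq, map_pow, hQ]

end vecMap

namespace Matrix.GeneralLinearGroup

variable {n : Type*} [Fintype n] [DecidableEq n] {R S : Type*} [CommRing R] [CommRing S]

variable (R) in
noncomputable def toMulAutVec : GL n R →* MulAut (Multiplicative (n → R)) :=
  MonoidHom.mk' (fun M => AddEquiv.toMultiplicative
    (LinearMap.GeneralLinearGroup.generalLinearEquiv R (n → R) (toLin M)).toAddEquiv)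
    fun M M' => by ext; simp [toLin]

theorem toMulAutVec_apply (M : GL n R) (v : Multiplicative (n → R)) :
    toMulAutVec R M v = Multiplicative.ofAdd ((M : Matrix n n R) *ᵥ v.toAdd) := by
  simp [toMulAutVec, toLin]

theorem vecMap_toMulAutVec (r : R →+* S) (M : GL n R) (v : Multiplicative (n → R)) :
    vecMap n r (toMulAutVec R M v) =
      toMulAutVec S (Units.map r.mapMatrix.toMonoidHom M) (vecMap n r v) := by
  ext i
  simp [vecMap, toMulAutVec_apply, RingHom.map_mulVec, AddMonoidHom.compLeft]

end Matrix.GeneralLinearGroup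

-- `Gmat A` unfolds to `MappingTorus _ (GeneralLinearGroup.toMulAutVec ℤ A)`.
theorem exists_surjective_of_conjMod {A B : GL (Fin 2) ℤ} (h : ∀ m : ℕ, 1 ≤ m → ConjMod m A B)
    {Q : Type} [Group Q] [Finite Q] {f : Gmat A →* Q} (hf : Surjective f) :
    ∃ g : Gmat B →* Q, Surjective g := by
  let m := Nat.card Q
  let r := Int.castRingHom (ZMod m)
  let red : GL (Fin 2) ℤ →* GL (Fin 2) (ZMod m) := Units.map r.mapMatrix.toMonoidHom
  let ψ := GeneralLinearGroup.toMulAutVec (n := Fin 2) (ZMod m)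
  obtain ⟨c, hc⟩ : IsConj (red B) (red A) := (h m Nat.card_pos).symm
  have hc_intertwines (v) : ψ c (ψ (red B) v) = ψ (red A) (ψ c v) := by
    rw [← MulAut.mul_apply, ← map_mul, hc.eq, map_mul, MulAut.mul_apply]
  let πA : Gmat A →* MappingTorus _ (ψ (red A)) :=
    MappingTorus.map (vecMap _ r) (GeneralLinearGroup.vecMap_toMulAutVec r A)
  let πB : Gmat B →* MappingTorus _ (ψ (red A)) :=
    MappingTorus.map ((ψ c).toMonoidHom.comp (vecMap _ r)) fun v =>
      (congrArg (ψ c) (GeneralLinearGroup.vecMap_toMulAutVec r B v)).trans (hc_intertwines _)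
  have hπA : Surjective πA :=
    MappingTorus.map_surjective _ (vecMap_surjective _ ZMod.intCast_surjective)
  have hπB : Surjective πB := MappingTorus.map_surjective _
    ((ψ c).surjective.comp (vecMap_surjective _ ZMod.intCast_surjective))
  have hker : πA.ker ≤ f.ker :=
    MappingTorus.ker_map_le_ker _ (ker_vecMap_intCast_le _ (fun _ => pow_card_eq_one') _)
  exact ⟨(πA.liftOfSurjective hπA ⟨f, hker⟩).comp πB,
    (MonoidHom.liftOfSurjective_surjective hπA hf hker).comp hπB⟩

theorem conjModAll_imp_sameFiniteQuotients (A B : GL (Fin 2) ℤ)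
    (h : ∀ m : ℕ, 1 ≤ m → ConjMod m A B) :
    SameFiniteQuotients (Gmat A) (Gmat B) := by
  intro Q _ _
  exact ⟨fun ⟨_, hf⟩ => exists_surjective_of_conjMod h hf,
    fun ⟨_, hf⟩ => exists_surjective_of_conjMod (fun m hm => (h m hm).symm) hf⟩
end

section
/- Let n ≥ 1 and let A ∈ GLₙ(ℤ) be a matrix all of whose eigenvalues equal 1, i.e., whose characteristic polynomial is (X − 1)ⁿ. Then the group G_A = ℤⁿ ⋊_A ℤ, where ℤ acts on ℤⁿ via the homomorphism ℤ → Aut(ℤⁿ) sending n to the automorphism given by Aⁿ, is nilpotent. -/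
open Matrix Polynomial

/-- The additive automorphism of `Fin n → ℤ` given by an element of `GLₙ(ℤ)`. -/
noncomputable def matAddAutN (n : ℕ) (A : GL (Fin n) ℤ) : (Fin n → ℤ) ≃+ (Fin n → ℤ) :=
  (LinearMap.GeneralLinearGroup.generalLinearEquiv ℤ (Fin n → ℤ)
    (Matrix.GeneralLinearGroup.toLin A)).toAddEquiv

/-- The same automorphism, viewed multiplicatively. -/
noncomputable def matMulAutN (n : ℕ) (A : GL (Fin n) ℤ) :
    MulAut (Multiplicative (Fin n → ℤ)) :=
  AddEquiv.toMultiplicative (matAddAutN n A)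

/-- The group `G_A = ℤⁿ ⋊_A ℤ`, where `ℤ` acts on `ℤⁿ` by `k ↦ Aᵏ`. -/
noncomputable abbrev GmatN (n : ℕ) (A : GL (Fin n) ℤ) :=
  SemidirectProduct (Multiplicative (Fin n → ℤ)) (Multiplicative ℤ)
    (zpowersHom (MulAut (Multiplicative (Fin n → ℤ))) (matMulAutN n A))

/-!
Write `u = A - 1`; by Cayley–Hamilton `uⁿ = 0`. Inside the normal subgroup `ℤⁿ` the kernels
`ker uⁱ` increase to `ker uⁿ = ℤⁿ`. The commutator of `v ∈ ker uⁱ⁺¹` with `(w, k)` is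
`v - Aᵏ v`, which lies in `ker uⁱ` because `uⁱ` commutes with `Aᵏ` and `uⁱ v` is fixed by `A`.
Hence `ker uⁱ` lies in the `i`-th term of the upper central series, and since `G_A / ℤⁿ ≅ ℤ` is
abelian, one more step of the series exhausts `G_A`.
-/

open scoped commutatorElement

namespace SemidirectProduct

theorem commutatorElement_inl {N G : Type*} [CommGroup N] [Group G] {φ : G →* MulAut N}
    (a : N) (g : N ⋊[φ] G) : ⁅(inl a : N ⋊[φ] G), g⁆ = inl (a * (φ g.right a)⁻¹) := by
  ext <;> simp [commutatorElement_def, mul_right_comm _ g.left]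

theorem commutatorElement_mem_range_inl {N G : Type*} [Group N] [CommGroup G]
    {φ : G →* MulAut N} (x g : N ⋊[φ] G) : ⁅x, g⁆ ∈ (inl : N →* N ⋊[φ] G).range := by
  rw [range_inl_eq_ker_rightHom, MonoidHom.mem_ker, map_commutatorElement,
    commutatorElement_eq_one_iff_commute]
  exact Commute.all _ _

end SemidirectProduct

namespace LinearMap.GeneralLinearGroup

variable {R M : Type*} [Ring R] [AddCommGroup M] [Module R M]

def toMulAutMultiplicative : GeneralLinearGroup R M →* MulAut (Multiplicative M) where
  toFun σ := AddEquiv.toMultiplicative (generalLinearEquiv R M σ).toAddEquiv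
  map_one' := rfl
  map_mul' _ _ := rfl

theorem toAdd_toMulAutMultiplicative_apply (σ : GeneralLinearGroup R M) (a : Multiplicative M) :
    (toMulAutMultiplicative σ a).toAdd = (σ : Module.End R M) a.toAdd :=
  rfl

theorem zpowersHom_toMulAutMultiplicative (σ : GeneralLinearGroup R M) (k : Multiplicative ℤ) :
    zpowersHom _ (toMulAutMultiplicative σ) k = toMulAutMultiplicative (σ ^ k.toAdd) := by
  rw [zpowersHom_apply, map_zpow]

abbrev SemidirectInt (σ : GeneralLinearGroup R M) : Type _ :=
  Multiplicative M ⋊[zpowersHom _ (toMulAutMultiplicative σ)] Multiplicative ℤ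

theorem zpow_apply_eq_self {σ : GeneralLinearGroup R M} {w : M}
    (h : (σ : Module.End R M) w = w) (k : ℤ) :
    ((σ ^ k : GeneralLinearGroup R M) : Module.End R M) w = w :=
  zpow_mem (show σ ∈ MulAction.stabilizer (GeneralLinearGroup R M) w from h) k

theorem sub_one_pow_apply_sub_zpow_apply {σ : GeneralLinearGroup R M} {i : ℕ} {v : M}
    (hv : (((σ : Module.End R M) - 1) ^ (i + 1)) v = 0) (k : ℤ) :
    (((σ : Module.End R M) - 1) ^ i)
      (v - ((σ ^ k : GeneralLinearGroup R M) : Module.End R M) v) = 0 := by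
  set u := (σ : Module.End R M) - 1
  have hfix : (σ : Module.End R M) ((u ^ i) v) = (u ^ i) v := by
    rwa [pow_succ', Module.End.mul_apply, LinearMap.sub_apply, Module.End.one_apply,
      sub_eq_zero] at hv
  have hcomm : Commute (u ^ i) ((σ ^ k : GeneralLinearGroup R M) : Module.End R M) :=
    (((Commute.refl _).sub_left (Commute.one_left _)).pow_left i).units_zpow_right k
  rw [map_sub, ← Module.End.mul_apply, hcomm.eq, Module.End.mul_apply, zpow_apply_eq_self hfix,
    sub_self]

def kerFiltration (σ : GeneralLinearGroup R M) (i : ℕ) : Subgroup (SemidirectInt σ) :=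
  (LinearMap.ker (((σ : Module.End R M) - 1) ^ i : Module.End R M)).toAddSubgroup.toSubgroup.map
    SemidirectProduct.inl

theorem inl_mem_kerFiltration {σ : GeneralLinearGroup R M} {i : ℕ} {a : Multiplicative M} :
    (SemidirectProduct.inl a : SemidirectInt σ) ∈ kerFiltration σ i ↔
      (((σ : Module.End R M) - 1) ^ i) a.toAdd = 0 :=
  Subgroup.mem_map_iff_mem SemidirectProduct.inl_injective

theorem kerFiltration_le_upperCentralSeries (σ : GeneralLinearGroup R M) (i : ℕ) :
    kerFiltration σ i ≤ Subgroup.upperCentralSeries (SemidirectInt σ) i := by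
  induction i with
  | zero => simp [kerFiltration, Module.End.one_eq_id]
  | succ i ih =>
    rintro _ ⟨a, ha, rfl⟩ g
    rw [SemidirectProduct.commutatorElement_inl, zpowersHom_toMulAutMultiplicative]
    refine ih (inl_mem_kerFiltration.2 ?_)
    rw [toAdd_mul, toAdd_inv, toAdd_toMulAutMultiplicative_apply, ← sub_eq_add_neg]
    exact sub_one_pow_apply_sub_zpow_apply ha g.right.toAdd

theorem upperCentralSeries_succ_eq_top {σ : GeneralLinearGroup R M} {n : ℕ}
    (hn : ((σ : Module.End R M) - 1) ^ n = 0) :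
    Subgroup.upperCentralSeries (SemidirectInt σ) (n + 1) = ⊤ := by
  refine eq_top_iff.2 fun x _ g ↦ kerFiltration_le_upperCentralSeries σ n ?_
  obtain ⟨a, ha⟩ := SemidirectProduct.commutatorElement_mem_range_inl x g
  rw [← ha, inl_mem_kerFiltration, hn, LinearMap.zero_apply]

theorem isNilpotent_semidirectInt {σ : GeneralLinearGroup R M}
    (hσ : IsNilpotent ((σ : Module.End R M) - 1)) : Group.IsNilpotent (SemidirectInt σ) := by
  obtain ⟨n, hn⟩ := hσ
  exact ⟨n + 1, upperCentralSeries_succ_eq_top hn⟩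

end LinearMap.GeneralLinearGroup

theorem Matrix.isNilpotent_sub_one_of_charpoly_eq {ι R : Type*} [Fintype ι] [DecidableEq ι]
    [CommRing R] {A : Matrix ι ι R} {m : ℕ} (hA : A.charpoly = (X - 1) ^ m) :
    IsNilpotent (A - 1) :=
  ⟨m, by simpa [hA] using Matrix.aeval_self_charpoly A⟩

theorem nilpotent_of_all_eigenvalues_one_general (n : ℕ) (A : GL (Fin n) ℤ)
    (hcp : Matrix.charpoly A.val = (X - 1) ^ n) :
    Group.IsNilpotent (GmatN n A) := by
  have hA := (Matrix.isNilpotent_sub_one_of_charpoly_eq hcp).map (Matrix.toLinAlgEquiv' (R := ℤ))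
  rw [map_sub, map_one] at hA
  -- `GmatN n A` unfolds to `SemidirectInt (Matrix.GeneralLinearGroup.toLin A)`.
  exact LinearMap.GeneralLinearGroup.isNilpotent_semidirectInt hA

theorem nilpotent_of_all_eigenvalues_one (n : ℕ) (hn : 1 ≤ n) (A : GL (Fin n) ℤ)
    (hcp : Matrix.charpoly A.val = (X - 1) ^ n) :
    Group.IsNilpotent (GmatN n A) :=
  nilpotent_of_all_eigenvalues_one_general n A hcp
end

section
/- Let K be a quadratic number field (i.e., [K : ℚ] = 2), let u be a unit of the ring of integers 𝒪_K with u ≠ ±1, and let S = ℤ[u, u⁻¹] be the subring of 𝒪_K generated by u and u⁻¹. Let I and J be nonzero ideals of 𝒪_K, regarded as S-modules by restriction of scalars along the inclusion S ⊆ 𝒪_K. If I and J are isomorphic as S-modules, then I and J lie in the same ideal class, i.e., there exists a nonzero α ∈ K with I = α·J; equivalently, ideals in distinct classes of the ideal class group of K are not isomorphic as S-modules. -/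
/-!
A unit `u ≠ ±1` is irrational, since a rational algebraic integer lies in `ℤ` and `ℤˣ = {±1}`;
so `1, u` span the quadratic field `K` over `ℚ`, and every element of `𝓞 K` has a nonzero integer
multiple in `ℤ[u] ⊆ S`. As ideals are torsion-free, an `S`-linear isomorphism `I ≃ J` is then
`𝓞 K`-linear, and an `𝓞 K`-linear map `f : J → 𝓞 K` is multiplication by `f y / y` for any
nonzero `y ∈ J`, because `y * f z = f (y * z) = z * f y`.
-/

open NumberField nonZeroDivisors

instance Submodule.isAddTorsionFree {R M : Type*} [Ring R] [AddCommGroup M] [Module R M]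
    [IsAddTorsionFree M] (N : Submodule R M) : IsAddTorsionFree N :=
  inferInstanceAs (IsAddTorsionFree N.toAddSubgroup)

theorem AddMonoidHom.map_smul_of_exists_zsmul_mem {R M N : Type*} [Ring R] [AddCommGroup M]
    [Module R M] [AddCommGroup N] [Module R N] [IsAddTorsionFree N] {S : Set R}
    (hS : ∀ r : R, ∃ n : ℤ, n ≠ 0 ∧ n • r ∈ S) (f : M →+ N)
    (hf : ∀ s ∈ S, ∀ x, f (s • x) = s • f x) (r : R) (x : M) : f (r • x) = r • f x := by
  obtain ⟨n, hn, hnr⟩ := hS r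
  rw [← zsmul_right_inj hn, ← map_zsmul, ← smul_assoc, hf _ hnr, smul_assoc]

theorem Subring.exists_zsmul_mem_of_mem_span {L : Type*} [Ring L] [Algebra ℚ L] (S : Subring L)
    {y : L} (hy : y ∈ Submodule.span ℚ (S : Set L)) : ∃ n : ℤ, n ≠ 0 ∧ n • y ∈ S := by
  induction hy using Submodule.span_induction with
  | mem y hy => exact ⟨1, one_ne_zero, by simpa using hy⟩
  | zero => exact ⟨1, one_ne_zero, by simp⟩
  | add y z _ _ hy hz =>
    obtain ⟨m, hm, hmy⟩ := hy
    obtain ⟨n, hn, hnz⟩ := hz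
    refine ⟨m * n, mul_ne_zero hm hn, ?_⟩
    rw [show (m * n) • (y + z) = n • (m • y) + m • (n • z) by module]
    exact S.add_mem (S.zsmul_mem hmy n) (S.zsmul_mem hnz m)
  | smul q y _ hy =>
    obtain ⟨n, hn, hny⟩ := hy
    refine ⟨q.den * n, mul_ne_zero (by exact_mod_cast q.den_nz) hn, ?_⟩
    have hq : (q.den : ℚ) * q = q.num := by rw [mul_comm, Rat.mul_den_eq_num]
    rw [show ((q.den : ℤ) * n) • (q • y) = q.num • (n • y) by
      match_scalars
      linear_combination (n : ℚ) * hq]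
    exact S.zsmul_mem hny _

theorem span_one_pair_eq_top_of_finrank_eq_two {F K : Type*} [Field F] [Ring K] [Nontrivial K]
    [Algebra F K] (h : Module.finrank F K = 2) {x : K} (hx : x ∉ Set.range (algebraMap F K)) :
    Submodule.span F {1, x} = ⊤ := by
  have : FiniteDimensional F K := Module.finite_of_finrank_eq_succ h
  have hli : LinearIndependent F ![x, 1] := linearIndependent_fin2.mpr
    ⟨one_ne_zero, fun a ha => hx ⟨a, by simpa [Algebra.algebraMap_eq_smul_one] using ha⟩⟩
  simpa [Matrix.range_cons, Set.range_unique] using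
    hli.span_eq_top_of_card_eq_finrank' (by simp [h])

section

variable {R K : Type*} [CommRing R] [IsDomain R] [Field K] [Algebra R K] [IsFractionRing R K]

theorem Ideal.exists_linearMap_eq_mul {I : Ideal R} (hI : I ≠ ⊥) (f : I →ₗ[R] R) :
    ∃ α : K, ∀ z : I, algebraMap R K (f z) = α * algebraMap R K z := by
  obtain ⟨x, hxI, hx⟩ := Submodule.exists_mem_ne_zero_of_ne_bot hI
  have hxK : algebraMap R K x ≠ 0 := IsFractionRing.to_map_ne_zero_of_mem_nonZeroDivisors
    (mem_nonZeroDivisors_of_ne_zero hx)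
  refine ⟨algebraMap R K (f ⟨x, hxI⟩) / algebraMap R K x, fun z => ?_⟩
  have hcomm : x * f z = z * f ⟨x, hxI⟩ := by
    rw [← smul_eq_mul, ← smul_eq_mul, ← map_smul, ← map_smul]
    congr 1
    exact Subtype.ext (by simp [mul_comm])
  rw [div_mul_eq_mul_div, eq_div_iff hxK, mul_comm, ← map_mul, hcomm, map_mul, mul_comm]

theorem Ideal.exists_coeIdeal_eq_spanSingleton_mul_of_linearEquiv {I J : Ideal R} (hJ : J ≠ ⊥)
    (e : I ≃ₗ[R] J) : ∃ α : K, α ≠ 0 ∧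
      (I : FractionalIdeal R⁰ K) = .spanSingleton R⁰ α * (J : FractionalIdeal R⁰ K) := by
  obtain ⟨α, hα⟩ := Ideal.exists_linearMap_eq_mul (K := K) hJ (I.subtype ∘ₗ e.symm.toLinearMap)
  simp only [LinearMap.coe_comp, Function.comp_apply, Submodule.subtype_apply] at hα
  refine ⟨α, ?_, FractionalIdeal.eq_spanSingleton_mul.mpr ⟨?_, ?_⟩⟩
  · rintro rfl
    refine hJ (eq_bot_iff.mpr fun y hy => ?_)
    have : e.symm ⟨y, hy⟩ = 0 :=
      Subtype.ext (IsFractionRing.injective R K (by simpa using hα ⟨y, hy⟩))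
    simpa using congrArg Subtype.val (e.symm.map_eq_zero_iff.mp this)
  · intro _ h
    obtain ⟨z, hz, rfl⟩ := (FractionalIdeal.mem_coeIdeal _).mp h
    refine ⟨_, FractionalIdeal.mem_coeIdeal_of_mem _ (e ⟨z, hz⟩).2, ?_⟩
    rw [← hα]
    simp
  · intro _ h
    obtain ⟨y, hy, rfl⟩ := (FractionalIdeal.mem_coeIdeal _).mp h
    rw [← hα ⟨y, hy⟩]
    exact FractionalIdeal.mem_coeIdeal_of_mem _ (e.symm ⟨y, hy⟩).2

end

namespace NumberField

variable {K : Type*} [Field K] [NumberField K]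

theorem RingOfIntegers.mem_range_algebraMap_int_of_coe_mem_range_rat {x : 𝓞 K}
    (hx : (x : K) ∈ Set.range (algebraMap ℚ K)) : x ∈ Set.range (algebraMap ℤ (𝓞 K)) := by
  obtain ⟨q, hq⟩ := hx
  have hq_int : IsIntegral ℤ q :=
    (isIntegral_algebraMap_iff (algebraMap ℚ K).injective).mp (hq ▸ x.isIntegral_coe)
  obtain ⟨m, rfl⟩ := IsIntegrallyClosed.isIntegral_iff.mp hq_int
  exact ⟨m, RingOfIntegers.coe_injective (by simpa using hq)⟩

theorem Units.eq_one_or_neg_one_of_coe_mem_range_rat {u : (𝓞 K)ˣ}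
    (hu : ((u : 𝓞 K) : K) ∈ Set.range (algebraMap ℚ K)) : u = 1 ∨ u = -1 := by
  obtain ⟨m, hm⟩ := RingOfIntegers.mem_range_algebraMap_int_of_coe_mem_range_rat hu
  have : IsUnit m := (isUnit_map_iff (algebraMap ℤ (𝓞 K)) m).mp (hm ▸ u.isUnit)
  rcases Int.isUnit_iff.mp this with rfl | rfl
  · exact .inl (Units.ext (by simpa using hm.symm))
  · exact .inr (Units.ext (by simpa using hm.symm))

theorem RingOfIntegers.exists_zsmul_mem_of_span_eq_top {S : Subring (𝓞 K)}
    (hS : Submodule.span ℚ (algebraMap (𝓞 K) K '' S) = ⊤) (c : 𝓞 K) :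
    ∃ n : ℤ, n ≠ 0 ∧ n • c ∈ S := by
  obtain ⟨n, hn, hnc⟩ := (S.map (algebraMap (𝓞 K) K)).exists_zsmul_mem_of_mem_span
    (y := c) (by simp [hS])
  obtain ⟨s, hs, hsc⟩ := Subring.mem_map.mp hnc
  have : s = n • c := RingOfIntegers.coe_injective (by simpa using hsc)
  exact ⟨n, hn, this ▸ hs⟩

end NumberField
theorem ideals_isomorphic_as_S_modules_same_class_general (K : Type*) [Field K] [NumberField K]
    (hquad : Module.finrank ℚ K = 2)
    (u : (𝓞 K)ˣ) (hu1 : u ≠ 1) (hu2 : u ≠ -1)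
    (I J : Ideal (𝓞 K)) (hJ : J ≠ ⊥)
    (hiso : ∃ e : I ≃+ J,
      ∀ s : 𝓞 K, s ∈ Subring.closure {((u : (𝓞 K)ˣ) : 𝓞 K), ((u⁻¹ : (𝓞 K)ˣ) : 𝓞 K)} →
        ∀ x : I, e (s • x) = s • e x) :
    ∃ α : K, α ≠ 0 ∧
      (I : FractionalIdeal (𝓞 K)⁰ K) =
        FractionalIdeal.spanSingleton (𝓞 K)⁰ α * (J : FractionalIdeal (𝓞 K)⁰ K) := by
  obtain ⟨e, he⟩ := hiso
  set S := Subring.closure {((u : (𝓞 K)ˣ) : 𝓞 K), ((u⁻¹ : (𝓞 K)ˣ) : 𝓞 K)}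
  have hu : ((u : 𝓞 K) : K) ∉ Set.range (algebraMap ℚ K) := fun h =>
    (Units.eq_one_or_neg_one_of_coe_mem_range_rat h).elim hu1 hu2
  have hspan : Submodule.span ℚ (algebraMap (𝓞 K) K '' S) = ⊤ := by
    rw [eq_top_iff, ← span_one_pair_eq_top_of_finrank_eq_two hquad hu]
    refine Submodule.span_mono (Set.insert_subset_iff.mpr ⟨⟨1, S.one_mem, map_one _⟩, ?_⟩)
    exact Set.singleton_subset_iff.mpr ⟨u, Subring.subset_closure (by simp), rfl⟩
  have hlin := e.toAddMonoidHom.map_smul_of_exists_zsmul_mem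
    (RingOfIntegers.exists_zsmul_mem_of_span_eq_top hspan) he
  exact Ideal.exists_coeIdeal_eq_spanSingleton_mul_of_linearEquiv hJ (e.toLinearEquiv hlin)

theorem ideals_isomorphic_as_S_modules_same_class (K : Type*) [Field K] [NumberField K]
    (hquad : Module.finrank ℚ K = 2)
    (u : (𝓞 K)ˣ) (hu1 : u ≠ 1) (hu2 : u ≠ -1)
    (I J : Ideal (𝓞 K)) (hI : I ≠ ⊥) (hJ : J ≠ ⊥)
    (hiso : ∃ e : I ≃+ J,
      ∀ s : 𝓞 K, s ∈ Subring.closure {((u : (𝓞 K)ˣ) : 𝓞 K), ((u⁻¹ : (𝓞 K)ˣ) : 𝓞 K)} →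
        ∀ x : I, e (s • x) = s • e x) :
    ∃ α : K, α ≠ 0 ∧
      (I : FractionalIdeal (𝓞 K)⁰ K) =
        FractionalIdeal.spanSingleton (𝓞 K)⁰ α * (J : FractionalIdeal (𝓞 K)⁰ K) :=
  ideals_isomorphic_as_S_modules_same_class_general K hquad u hu1 hu2 I J hJ hiso
end

section
/- Let K be a number field, let I be a nonzero ideal of the ring of integers 𝒪_K, and let m be a positive integer. Then the quotient modules I/mI and 𝒪_K/m𝒪_K are isomorphic as 𝒪_K-modules. -/
/-!
In a Dedekind domain, for nonzero ideals `I` and `M` some `y` satisfies `I = (y) + M I`. Writing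
`(y) = I J` and cancelling `I` gives `J + M = R`; so `x y ∈ M I` forces `x J ⊆ M`, hence `x ∈ M`.
Thus `x ↦ x y` induces `R ⧸ M ≃ I ⧸ M I`.
-/

open NumberField

namespace Ideal

section CommRing

variable {R : Type*} [CommRing R] {I M : Ideal R} {y : R}

/-- Induced by `x ↦ x • y`. -/
noncomputable def quotEquivQuotSMulTopOfGenerator (hyI : y ∈ I) (hsup : span {y} ⊔ M * I = I)
    (hker : ∀ x, x * y ∈ M * I → x ∈ M) :
    (R ⧸ M) ≃ₗ[R] I ⧸ M • (⊤ : Submodule R I) :=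
  let f : R →ₗ[R] I ⧸ M • (⊤ : Submodule R I) :=
    LinearMap.toSpanSingleton R _ (Submodule.Quotient.mk ⟨y, hyI⟩)
  have hf : LinearMap.ker f = M := by
    ext x
    rw [LinearMap.mem_ker, LinearMap.toSpanSingleton_apply, ← Submodule.Quotient.mk_smul,
      Submodule.Quotient.mk_eq_zero, Submodule.mem_smul_top_iff, smul_eq_mul]
    exact ⟨hker x, fun hx => mul_mem_mul hx hyI⟩
  have hf_surj : Function.Surjective f := by
    rintro ⟨z, hz⟩
    obtain ⟨c, v, hv, rfl⟩ := mem_span_singleton_sup.mp (hsup ▸ hz)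
    refine ⟨c, (Submodule.Quotient.eq _).mpr ?_⟩
    rw [Submodule.mem_smul_top_iff, smul_eq_mul]
    simpa using neg_mem hv
  (Submodule.quotEquivOfEq _ _ hf).symm.trans (f.quotKerEquivOfSurjective hf_surj)

end CommRing

section IsDedekindDomain

variable {R : Type*} [CommRing R] [IsDedekindDomain R] {I M : Ideal R} {y : R}

theorem exists_span_singleton_sup_mul_eq (hI : I ≠ ⊥) (hM : M ≠ ⊥) :
    ∃ y, span {y} ⊔ M * I = I := by
  obtain ⟨y, hy⟩ := IsDedekindDomain.exists_sup_span_eq (mul_le_right : M * I ≤ I)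
    (mul_ne_zero hM hI)
  exact ⟨y, sup_comm (M * I) _ ▸ hy⟩

theorem mem_of_mul_mem_mul_of_span_singleton_sup_mul_eq (hI : I ≠ ⊥)
    (hsup : span {y} ⊔ M * I = I) {x : R} (hx : x * y ∈ M * I) : x ∈ M := by
  obtain ⟨J, hJ⟩ := dvd_iff_le.mpr (hsup ▸ le_sup_left : span {y} ≤ I)
  have hJM : J ⊔ M = ⊤ := by
    refine mul_left_cancel₀ hI ?_
    rw [mul_sup, ← hJ, mul_comm I M, hsup, mul_top]
  have hxJ : span {x} * J ≤ M := by
    rw [← dvd_iff_le]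
    refine (mul_dvd_mul_iff_left hI).mp (dvd_iff_le.mpr ?_)
    rw [mul_left_comm, ← hJ, span_singleton_mul_span_singleton, span_singleton_le_iff_mem,
      mul_comm I M]
    exact hx
  have hxM : span {x} * (J ⊔ M) ≤ M := mul_sup (span {x}) J M ▸ sup_le hxJ mul_le_right
  rw [hJM, mul_top, span_singleton_le_iff_mem] at hxM
  exact hxM

theorem nonempty_quotSMulTop_equiv (hI : I ≠ ⊥) (hM : M ≠ ⊥) :
    Nonempty ((I ⧸ M • (⊤ : Submodule R I)) ≃ₗ[R] R ⧸ M) := by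
  obtain ⟨y, hsup⟩ := exists_span_singleton_sup_mul_eq hI hM
  exact ⟨(quotEquivQuotSMulTopOfGenerator (hsup ▸ mem_sup_left (mem_span_singleton_self y)) hsup
    fun _ => mem_of_mul_mem_mul_of_span_singleton_sup_mul_eq hI hsup).symm⟩

end IsDedekindDomain

end Ideal

set_option synthInstance.maxHeartbeats 1000000 in
theorem quotient_ideal_mod_m_iso (K : Type*) [Field K] [NumberField K]
    (I : Ideal (𝓞 K)) (hI : I ≠ ⊥) (m : ℕ) (hm : 0 < m) :
    Nonempty
      ((I ⧸ (Ideal.span {(m : 𝓞 K)} • (⊤ : Submodule (𝓞 K) I))) ≃ₗ[𝓞 K]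
        ((𝓞 K) ⧸ Ideal.span {(m : 𝓞 K)})) :=
  Ideal.nonempty_quotSMulTop_equiv hI <| by
    simpa [Ideal.span_singleton_eq_bot] using hm.ne'
end

section
/- Let A ∈ GL₂(ℤ) have characteristic polynomial (X + 1)² (i.e., tr(A) = −2 and det(A) = 1). If B ∈ GL₂(ℤ) is conjugate to A modulo m for every integer m ≥ 1, then B is conjugate to A in GL₂(ℤ). -/
open Matrix Polynomial IntermediateField

/-!
Conjugacy modulo every `m` forces `B` to have the characteristic polynomial of `A`, so `A + 1`
and `B + 1` square to zero. A square-zero integral `2 × 2` matrix kills a primitive vector, and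
completing it to a basis of `ℤ²` conjugates `A` and `B` to `-[1, a; 0, 1]` and `-[1, b; 0, 1]`.
Modulo `m` such a matrix is the central element `-1` exactly when `m ∣ a`, and central elements
are conjugate only to themselves, so `m ∣ a ↔ m ∣ b` for all `m`. Hence `b = ±a`, and
conjugation by `diag(1, -1)` flips the sign.
-/

open Matrix.GeneralLinearGroup

theorem Int.eq_of_forall_intCast_zmod_eq {a b : ℤ} (h : ∀ m : ℕ, 0 < m → (a : ZMod m) = b) :
    a = b := by
  have hdvd := (ZMod.intCast_eq_intCast_iff_dvd_sub _ _ _).1 (h ((b - a).natAbs + 1) (by omega))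
  have hzero := Int.eq_zero_of_dvd_of_natAbs_lt_natAbs hdvd (by omega)
  omega

theorem Polynomial.eq_of_forall_map_zmod_eq {p q : ℤ[X]}
    (h : ∀ m : ℕ, 0 < m → p.map (Int.castRingHom (ZMod m)) = q.map (Int.castRingHom (ZMod m))) :
    p = q :=
  ext fun n => Int.eq_of_forall_intCast_zmod_eq fun m hm => by
    simpa using congrArg (coeff · n) (h m hm)

theorem IsConj.charpoly_eq {n R : Type*} [Fintype n] [DecidableEq n] [CommRing R]
    {A B : GL n R} (h : IsConj A B) : A.val.charpoly = B.val.charpoly := by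
  obtain ⟨c, rfl⟩ := isConj_iff.1 h
  simp

theorem ConjMod.charpoly_map_eq {m : ℕ} {A B : GL (Fin 2) ℤ} (h : ConjMod m A B) :
    A.val.charpoly.map (Int.castRingHom (ZMod m)) =
      B.val.charpoly.map (Int.castRingHom (ZMod m)) := by
  simpa [← charpoly_map] using h.charpoly_eq

theorem IsConj.conjMod {A B : GL (Fin 2) ℤ} (h : IsConj A B) (m : ℕ) : ConjMod m A B :=
  MonoidHom.map_isConj _ h

theorem charpoly_eq_of_forall_conjMod {A B : GL (Fin 2) ℤ} (h : ∀ m : ℕ, 0 < m → ConjMod m A B) :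
    A.val.charpoly = B.val.charpoly :=
  Polynomial.eq_of_forall_map_zmod_eq fun m hm => (h m hm).charpoly_map_eq

theorem Matrix.exists_isCoprime_mulVec_eq_zero {N : Matrix (Fin 2) (Fin 2) ℤ} (h : N.det = 0) :
    ∃ v : Fin 2 → ℤ, IsCoprime (v 0) (v 1) ∧ N *ᵥ v = 0 := by
  obtain ⟨w, hw0, hw⟩ := Matrix.exists_mulVec_eq_zero_iff.2 h
  have hg : 0 < Int.gcd (w 0) (w 1) := Int.gcd_pos_iff.2 <| by
    contrapose! hw0; ext i; fin_cases i <;> simp [hw0]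
  obtain ⟨g, s, t, hg0, hst, hs, ht⟩ := Int.exists_gcd_one' hg
  refine ⟨![s, t], Int.isCoprime_iff_gcd_eq_one.2 hst, ?_⟩
  have hw_eq : w = (g : ℤ) • ![s, t] := by ext i; fin_cases i <;> simp [hs, ht, mul_comm]
  rw [hw_eq, Matrix.mulVec_smul] at hw
  exact (smul_eq_zero.1 hw).resolve_left (by positivity)

theorem Matrix.GeneralLinearGroup.exists_col_zero_eq {R : Type*} [CommRing R]
    {v : Fin 2 → R} (hv : IsCoprime (v 0) (v 1)) :
    ∃ P : GL (Fin 2) R, (P : Matrix (Fin 2) (Fin 2) R).col 0 = v := by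
  obtain ⟨a, b, hab⟩ := hv
  refine ⟨⟨!![v 0, -b; v 1, a], !![a, b; -v 1, v 0], ?_, ?_⟩, ?_⟩
  · simp [one_fin_two]; grind
  · simp [one_fin_two]; grind
  · ext i; fin_cases i <;> simp

theorem Matrix.exists_inv_mul_mul_eq_of_mul_self_eq_zero {N : Matrix (Fin 2) (Fin 2) ℤ}
    (hN : N * N = 0) :
    ∃ (P : GL (Fin 2) ℤ) (k : ℤ), (↑P⁻¹ : Matrix (Fin 2) (Fin 2) ℤ) * N * P = !![0, k; 0, 0] := by
  have hdet : N.det = 0 := mul_self_eq_zero.1 (by simp [← det_mul, hN])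
  obtain ⟨v, hv, hNv⟩ := exists_isCoprime_mulVec_eq_zero hdet
  obtain ⟨P, hP⟩ := GeneralLinearGroup.exists_col_zero_eq hv
  set M := (↑P⁻¹ : Matrix (Fin 2) (Fin 2) ℤ) * N * P
  have hMe : M.col 0 = 0 := by
    rw [← mulVec_single_one, ← mulVec_mulVec, ← mulVec_mulVec, mulVec_single_one, hP, hNv,
      mulVec_zero]
  have hMM : M * M = 0 := by
    simp only [M, mul_assoc, Units.mul_inv_cancel_left, hN, ← mul_assoc (N : Matrix _ _ ℤ)]
    simp
  have h00 : M 0 0 = 0 := by simpa using congrFun hMe 0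
  have h10 : M 1 0 = 0 := by simpa using congrFun hMe 1
  have h11 : M 1 1 = 0 := by
    simpa [mul_apply, Fin.sum_univ_two, h10] using congrFun (congrFun hMM 1) 1
  exact ⟨P, M 0 1, (eta_fin_two M).trans (by rw [h00, h10, h11])⟩

theorem exists_isConj_neg_upperRightHom {A : GL (Fin 2) ℤ} (hA : A.val.charpoly = (X + 1) ^ 2) :
    ∃ k : ℤ, IsConj A (-upperRightHom k) := by
  have hN : (A.val + 1) * (A.val + 1) = 0 := by simpa [hA, sq] using aeval_self_charpoly A.val
  obtain ⟨P, k, hP⟩ := exists_inv_mul_mul_eq_of_mul_self_eq_zero hN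
  refine ⟨-k, isConj_iff.2 ⟨P⁻¹, Units.ext ?_⟩⟩
  have hA' : (↑P⁻¹ : Matrix (Fin 2) (Fin 2) ℤ) * A * P = !![0, k; 0, 0] - 1 := by
    rw [← hP]; simp [mul_add, add_mul]
  rw [Units.val_mul, Units.val_mul, inv_inv, hA']
  simp [one_fin_two]

theorem Matrix.GeneralLinearGroup.map_neg_upperRightHom {R S : Type*} [CommRing R] [CommRing S]
    (f : R →+* S) (k : R) :
    Units.map f.mapMatrix.toMonoidHom (-upperRightHom k) = -upperRightHom (f k) := by
  ext i j; fin_cases i <;> fin_cases j <;> simp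

theorem Matrix.GeneralLinearGroup.neg_upperRightHom_eq_neg_one_iff {R : Type*} [Ring R] {k : R} :
    -upperRightHom k = -1 ↔ k = 0 := by
  rw [neg_inj, ← AddChar.map_zero_eq_one upperRightHom, injective_upperRightHom.eq_iff]

theorem Units.neg_one_mem_center {R : Type*} [Ring R] : (-1 : Rˣ) ∈ Set.center Rˣ :=
  Semigroup.mem_center_iff.2 fun g => by simp

theorem IsConj.eq_zero_iff_of_neg_upperRightHom {R : Type*} [Ring R] {a b : R}
    (h : IsConj (-upperRightHom a) (-upperRightHom b)) : a = 0 ↔ b = 0 := by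
  simp only [← neg_upperRightHom_eq_neg_one_iff]
  exact ⟨fun ha => (h.eq_of_left_mem_center (ha ▸ Units.neg_one_mem_center)).symm.trans ha,
    fun hb => (h.eq_of_right_mem_center (hb ▸ Units.neg_one_mem_center)).trans hb⟩

theorem isConj_neg_upperRightHom_neg {R : Type*} [CommRing R] (k : R) :
    IsConj (-upperRightHom (-k)) (-upperRightHom k) := by
  let D : GL (Fin 2) R := ⟨!![1, 0; 0, -1], !![1, 0; 0, -1], by simp [one_fin_two],
    by simp [one_fin_two]⟩
  exact isConj_iff.2 ⟨D, Units.ext (by simp [D])⟩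

theorem Nat.eq_of_forall_pos_dvd_iff {x y : ℕ} (h : ∀ m, 0 < m → (m ∣ x ↔ m ∣ y)) : x = y := by
  have key : ∀ {x y : ℕ}, (∀ m, 0 < m → (m ∣ x ↔ m ∣ y)) → x ∣ y := fun {x y} h => by
    rcases x.eq_zero_or_pos with rfl | hx
    · have hdvd := (h (y + 1) y.succ_pos).1 (dvd_zero _)
      exact zero_dvd_iff.2 (Nat.eq_zero_of_dvd_of_lt hdvd y.lt_succ_self)
    · exact (h x hx).1 dvd_rfl
  exact Nat.dvd_antisymm (key h) (key fun m hm => (h m hm).symm)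

theorem Int.natAbs_eq_of_forall_zmod_eq_zero_iff {a b : ℤ}
    (h : ∀ m : ℕ, 0 < m → ((a : ZMod m) = 0 ↔ (b : ZMod m) = 0)) : a.natAbs = b.natAbs :=
  Nat.eq_of_forall_pos_dvd_iff fun m hm => by
    simpa [ZMod.intCast_zmod_eq_zero_iff_dvd, Int.natCast_dvd] using h m hm

theorem conjModAll_imp_conj_of_charpoly_X_add_one_sq (A : GL (Fin 2) ℤ)
    (hcp : Matrix.charpoly A.val = (X + 1) ^ 2)
    (B : GL (Fin 2) ℤ) (h : ∀ m : ℕ, 1 ≤ m → ConjMod m B A) :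
    IsConj B A := by
  obtain ⟨a, hA⟩ := exists_isConj_neg_upperRightHom hcp
  obtain ⟨b, hB⟩ := exists_isConj_neg_upperRightHom ((charpoly_eq_of_forall_conjMod h).trans hcp)
  have hba : b.natAbs = a.natAbs := Int.natAbs_eq_of_forall_zmod_eq_zero_iff fun m hm => by
    have hconj := (hB.symm.conjMod m).trans ((h m hm).trans (hA.conjMod m))
    rw [map_neg_upperRightHom, map_neg_upperRightHom] at hconj
    simpa using hconj.eq_zero_iff_of_neg_upperRightHom
  rcases Int.natAbs_eq_natAbs_iff.1 hba with rfl | rfl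
  · exact hB.trans hA.symm
  · exact (hB.trans (isConj_neg_upperRightHom_neg a)).trans hA.symm
end
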